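/- For every ε ∈ (0,1) and every y in the open interval (y₁(ε), y₂(ε)), one has Q(y) = b(ε) − 3y² + 2y³ > 0. -/

import Mathlib

/-!
`Q` factors as `2 (y − y₁)(y₂ − y)(y₃ − y)` with third root `y₃ = (1 + √(4 − 3ε²))/2`,
and `y₂ < y₃` because `ε < √(4 − 3ε²)`; so on `(y₁, y₂)` all three factors are positive.
-/

/-- The parameter `b(ε) = 1/2 − ((1 − 3ε²)/4)·√(4 − 3ε²)` of the Sasaki–Einstein
metric `Y^{p,q}`, with `ε = q/p`. -/
noncomputable def ypqB (ε : ℝ) : ℝ :=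
  1/2 - ((1 - 3*ε^2)/4) * Real.sqrt (4 - 3*ε^2)

/-- The endpoint `y₁(ε) = (2 − 3ε − √(4 − 3ε²))/4`. -/
noncomputable def ypqY1 (ε : ℝ) : ℝ := (2 - 3*ε - Real.sqrt (4 - 3*ε^2))/4

/-- The endpoint `y₂(ε) = (2 + 3ε − √(4 − 3ε²))/4`. -/
noncomputable def ypqY2 (ε : ℝ) : ℝ := (2 + 3*ε - Real.sqrt (4 - 3*ε^2))/4

-- The roots of `2y³ − 3y² + b` sum to `3/2`, which determines `y₃` from `y₁` and `y₂`.
noncomputable def ypqY3 (ε : ℝ) : ℝ := (1 + Real.sqrt (4 - 3*ε^2))/2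

theorem ypqB_sub_eq_mul {ε : ℝ} (hε : 3*ε^2 ≤ 4) (y : ℝ) :
    ypqB ε - 3*y^2 + 2*y^3 = 2 * (y - ypqY1 ε) * (ypqY2 ε - y) * (ypqY3 ε - y) := by
  have hs : Real.sqrt (4 - 3*ε^2) ^ 2 = 4 - 3*ε^2 := Real.sq_sqrt (by linarith)
  simp only [ypqB, ypqY1, ypqY2, ypqY3]
  linear_combination (Real.sqrt (4 - 3*ε^2)/16 + 3*y/8 - 3/16) * hs

theorem lt_sqrt_four_sub_three_mul_sq {ε : ℝ} (hε : ε < 1) : ε < Real.sqrt (4 - 3*ε^2) := by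
  rcases lt_or_ge ε 0 with hneg | hnonneg
  · exact hneg.trans_le (Real.sqrt_nonneg _)
  · rw [Real.lt_sqrt hnonneg]
    nlinarith

theorem ypqY2_lt_ypqY3 {ε : ℝ} (hε : ε < 1) : ypqY2 ε < ypqY3 ε := by
  have := lt_sqrt_four_sub_three_mul_sq hε
  simp only [ypqY2, ypqY3]
  linarith

/-- For every `ε ∈ (0,1)` and every `y ∈ (y₁(ε), y₂(ε))`, one has
`Q(y) = b(ε) − 3y² + 2y³ > 0`. -/
theorem ypq_Q_pos :
    ∀ ε ∈ Set.Ioo (0 : ℝ) 1, ∀ y ∈ Set.Ioo (ypqY1 ε) (ypqY2 ε),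
      0 < ypqB ε - 3*y^2 + 2*y^3 := by
  rintro ε ⟨hε0, hε1⟩ y ⟨hy1, hy2⟩
  rw [ypqB_sub_eq_mul (by nlinarith) y]
  have h1 : 0 < y - ypqY1 ε := sub_pos.mpr hy1
  have h2 : 0 < ypqY2 ε - y := sub_pos.mpr hy2
  have h3 : 0 < ypqY3 ε - y := sub_pos.mpr (hy2.trans (ypqY2_lt_ypqY3 hε1))
  positivity
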